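/- Let p ≥ 2, β ≥ 1, δ > 0, M > 0, and define (t)⁺_M := min{max{t,0}, M}. Then for all real a, b, c, d: (J_p(a−b) − J_p(c−d)) · (((a−c)⁺_M + δ)^β − ((b−d)⁺_M + δ)^β) ≥ (1/(3·2^(p−1))) · (β p^p/(β+p−1)^p) · |((a−c)⁺_M + δ)^((β+p−1)/p) − ((b−d)⁺_M + δ)^((β+p−1)/p)|^p. -/

import Mathlib

/-!
For `t ≤ s` and `p ≥ 2` one has `J_p(s) - J_p(t) ≥ 2^(2-p) (s - t)^(p-1)`: by superadditivity of
`x ↦ x^(p-1)` on `[0, ∞)` when `s` and `t` have the same sign, and by its convexity when they do not.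
After swapping `(a, c)` with `(b, d)` we may assume `u ≥ v` for the shifted truncations
`u = (a-c)⁺_M + δ`, `v = (b-d)⁺_M + δ`; as the truncation is monotone and 1-Lipschitz,
`u - v ≤ (a - b) - (c - d)`. Finally `u^γ - v^γ = γ ∫_v^u x^((β-1)/p) dx` with `γ = (β+p-1)/p`, and
Jensen's inequality for `x ↦ x^p` on `[v, u]` gives `β (u^γ - v^γ)^p ≤ γ^p (u-v)^(p-1) (u^β - v^β)`.
This proves the inequality with the constant `2^(2-p) = 2 / 2^(p-1)` in place of `1 / (3·2^(p-1))`.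
-/

open Set MeasureTheory

noncomputable def Jp (p t : ℝ) : ℝ := |t| ^ (p - 2) * t

noncomputable def truncPlus (M t : ℝ) : ℝ := min (max t 0) M

lemma Real.rpow_add_le_mul_rpow_add_rpow {x y q : ℝ} (hx : 0 ≤ x) (hy : 0 ≤ y) (hq : 1 ≤ q) :
    (x + y) ^ q ≤ 2 ^ (q - 1) * (x ^ q + y ^ q) := by
  lift x to NNReal using hx
  lift y to NNReal using hy
  exact_mod_cast NNReal.rpow_add_le_mul_rpow_add_rpow x y hq

lemma Real.rpow_sub_le_sub_rpow {q s t : ℝ} (hq : 1 ≤ q) (ht : 0 ≤ t) (hts : t ≤ s) :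
    (s - t) ^ q ≤ s ^ q - t ^ q := by
  have h := Real.add_rpow_le_rpow_add (sub_nonneg.2 hts) ht hq
  rw [sub_add_cancel] at h
  linarith

section Jp

lemma Jp_neg (p t : ℝ) : Jp p (-t) = -Jp p t := by
  simp only [Jp, abs_neg, mul_neg]

variable {p s t : ℝ}

lemma Jp_of_nonneg (hp : p ≠ 1) (ht : 0 ≤ t) : Jp p t = t ^ (p - 1) := by
  rcases ht.eq_or_lt with rfl | ht
  · simp [Jp, Real.zero_rpow (sub_ne_zero.2 hp)]
  · rw [Jp, abs_of_pos ht, show p - 1 = p - 2 + 1 by ring, Real.rpow_add_one ht.ne']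

lemma Jp_of_nonpos (hp : p ≠ 1) (ht : t ≤ 0) : Jp p t = -(-t) ^ (p - 1) := by
  rw [← Jp_of_nonneg hp (neg_nonneg.2 ht), Jp_neg, neg_neg]

lemma sub_rpow_le_Jp_sub_Jp_of_nonneg (hp : 2 ≤ p) (ht : 0 ≤ t) (hts : t ≤ s) :
    (s - t) ^ (p - 1) ≤ Jp p s - Jp p t := by
  rw [Jp_of_nonneg (by linarith) (ht.trans hts), Jp_of_nonneg (by linarith) ht]
  exact Real.rpow_sub_le_sub_rpow (by linarith) ht hts

lemma two_rpow_mul_sub_rpow_le_Jp_sub_Jp_of_nonpos_of_nonneg (hp : 2 ≤ p) (ht : t ≤ 0)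
    (hs : 0 ≤ s) : 2 ^ (2 - p) * (s - t) ^ (p - 1) ≤ Jp p s - Jp p t := by
  have hconv := Real.rpow_add_le_mul_rpow_add_rpow hs (neg_nonneg.2 ht) (by linarith : 1 ≤ p - 1)
  have h2 : (2 : ℝ) ^ (2 - p) * 2 ^ (p - 1 - 1) = 1 := by
    rw [← Real.rpow_add two_pos, show 2 - p + (p - 1 - 1) = 0 by ring, Real.rpow_zero]
  rw [← sub_eq_add_neg] at hconv
  rw [Jp_of_nonneg (by linarith) hs, Jp_of_nonpos (by linarith) ht]
  calc 2 ^ (2 - p) * (s - t) ^ (p - 1)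
      ≤ 2 ^ (2 - p) * (2 ^ (p - 1 - 1) * (s ^ (p - 1) + (-t) ^ (p - 1))) := by gcongr
    _ = s ^ (p - 1) - -(-t) ^ (p - 1) := by rw [← mul_assoc, h2]; ring

theorem two_rpow_mul_sub_rpow_le_Jp_sub_Jp (hp : 2 ≤ p) (hts : t ≤ s) :
    2 ^ (2 - p) * (s - t) ^ (p - 1) ≤ Jp p s - Jp p t := by
  have hweaken : 2 ^ (2 - p) * (s - t) ^ (p - 1) ≤ (s - t) ^ (p - 1) :=
    mul_le_of_le_one_left (Real.rpow_nonneg (sub_nonneg.2 hts) _)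
      (Real.rpow_le_one_of_one_le_of_nonpos one_le_two (by linarith))
  rcases le_total 0 t with ht | ht
  · exact hweaken.trans (sub_rpow_le_Jp_sub_Jp_of_nonneg hp ht hts)
  rcases le_total s 0 with hs | hs
  · have h := sub_rpow_le_Jp_sub_Jp_of_nonneg hp (neg_nonneg.2 hs) (neg_le_neg hts)
    rw [Jp_neg, Jp_neg, neg_sub_neg, neg_sub_neg] at h
    exact hweaken.trans (by linarith)
  · exact two_rpow_mul_sub_rpow_le_Jp_sub_Jp_of_nonpos_of_nonneg hp ht hs

end Jp

theorem rpow_intervalIntegral_le {f : ℝ → ℝ} {a b p : ℝ} (hab : a < b) (hp : 1 ≤ p)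
    (hf : ContinuousOn f (Icc a b)) (hf0 : ∀ x ∈ Icc a b, 0 ≤ f x) :
    (∫ x in a..b, f x) ^ p ≤ (b - a) ^ (p - 1) * ∫ x in a..b, f x ^ p := by
  have hba : 0 < b - a := sub_pos.2 hab
  have hfp : ContinuousOn (fun x => f x ^ p) (Icc a b) :=
    hf.rpow_const fun _ _ => Or.inr (by linarith)
  have hjensen : (⨍ x in a..b, f x) ^ p ≤ ⨍ x in a..b, f x ^ p := by
    rw [uIoc_of_le hab.le]
    refine (convexOn_rpow hp).map_set_average_le
      (continuousOn_id.rpow_const fun _ _ => Or.inr (by linarith)) isClosed_Ici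
      (by simp [hab]) (by simp) ?_
      (hf.integrableOn_Icc.mono_set Ioc_subset_Icc_self)
      (hfp.integrableOn_Icc.mono_set Ioc_subset_Icc_self)
    filter_upwards [ae_restrict_mem measurableSet_Ioc] with x hx
    exact hf0 x (Ioc_subset_Icc_self hx)
  have hint : 0 ≤ ∫ x in a..b, f x :=
    intervalIntegral.integral_nonneg hab.le hf0
  rw [interval_average_eq_div, interval_average_eq_div, Real.div_rpow hint hba.le,
    div_le_div_iff₀ (by positivity) hba] at hjensen
  calc (∫ x in a..b, f x) ^ p = (∫ x in a..b, f x) ^ p * (b - a) / (b - a) := by field_simp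
    _ ≤ (∫ x in a..b, f x ^ p) * (b - a) ^ p / (b - a) := by gcongr
    _ = (b - a) ^ (p - 1) * ∫ x in a..b, f x ^ p := by
      rw [Real.rpow_sub_one hba.ne']; ring

theorem mul_rpow_sub_rpow_rpow_le {p β u v : ℝ} (hp : 1 ≤ p) (hβ : 0 < β) (hv : 0 < v)
    (hvu : v < u) :
    β * (u ^ ((β + p - 1) / p) - v ^ ((β + p - 1) / p)) ^ p
      ≤ ((β + p - 1) / p) ^ p * ((u - v) ^ (p - 1) * (u ^ β - v ^ β)) := by
  set γ := (β + p - 1) / p with hγ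
  have hp0 : 0 < p := by linarith
  have hγ0 : 0 < γ := div_pos (by linarith) hp0
  have hr : (β - 1) / p + 1 = γ := by rw [hγ]; field_simp; ring
  have hzero : (0 : ℝ) ∉ uIcc v u := by
    rw [uIcc_of_le hvu.le]; exact fun h => hv.not_ge h.1
  have hpos : ∀ x ∈ Icc v u, 0 < x := fun x hx => hv.trans_le hx.1
  have hholder := rpow_intervalIntegral_le (f := fun x => x ^ ((β - 1) / p)) hvu hp
    (continuousOn_id.rpow_const fun x hx => Or.inl (hpos x hx).ne')
    (fun x hx => Real.rpow_nonneg (hpos x hx).le _)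
  have h1 : ∫ x in v..u, x ^ ((β - 1) / p) = (u ^ γ - v ^ γ) / γ := by
    rw [integral_rpow (Or.inr ⟨fun h => by linarith, hzero⟩), hr]
  have h2 : ∫ x in v..u, (x ^ ((β - 1) / p)) ^ p = (u ^ β - v ^ β) / β := by
    rw [intervalIntegral.integral_congr (g := fun x => x ^ (β - 1)), integral_rpow
      (Or.inl (by linarith)), sub_add_cancel]
    intro x hx
    rw [uIcc_of_le hvu.le] at hx
    simp only [← Real.rpow_mul (hpos x hx).le, div_mul_cancel₀ _ hp0.ne']
  have hγv : v ^ γ ≤ u ^ γ := Real.rpow_le_rpow hv.le hvu.le hγ0.le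
  rw [h1, h2, Real.div_rpow (sub_nonneg.2 hγv) hγ0.le, div_le_iff₀ (by positivity)] at hholder
  calc β * (u ^ γ - v ^ γ) ^ p ≤ β * ((u - v) ^ (p - 1) * ((u ^ β - v ^ β) / β) * γ ^ p) := by
        gcongr
    _ = γ ^ p * ((u - v) ^ (p - 1) * (u ^ β - v ^ β)) := by field_simp

theorem rpow_sub_rpow_rpow_le_Jp_sub_mul_rpow_sub {p β s t u v : ℝ} (hp : 2 ≤ p) (hβ : 0 < β)
    (hv : 0 < v) (hvu : v < u) (hsub : u - v ≤ s - t) :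
    2 ^ (2 - p) * (β * p ^ p / (β + p - 1) ^ p) *
        (u ^ ((β + p - 1) / p) - v ^ ((β + p - 1) / p)) ^ p
      ≤ (Jp p s - Jp p t) * (u ^ β - v ^ β) := by
  have hp0 : 0 < p := by linarith
  have hβp : 0 < β + p - 1 := by linarith
  have hβuv : 0 ≤ u ^ β - v ^ β := sub_nonneg.2 (Real.rpow_le_rpow hv.le hvu.le hβ.le)
  calc 2 ^ (2 - p) * (β * p ^ p / (β + p - 1) ^ p) *
        (u ^ ((β + p - 1) / p) - v ^ ((β + p - 1) / p)) ^ p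
      = 2 ^ (2 - p) * (p ^ p / (β + p - 1) ^ p) *
        (β * (u ^ ((β + p - 1) / p) - v ^ ((β + p - 1) / p)) ^ p) := by ring
    _ ≤ 2 ^ (2 - p) * (p ^ p / (β + p - 1) ^ p) *
        (((β + p - 1) / p) ^ p * ((u - v) ^ (p - 1) * (u ^ β - v ^ β))) := by
      have hcoef : 0 ≤ 2 ^ (2 - p) * (p ^ p / (β + p - 1) ^ p) :=
        mul_nonneg (by positivity) (div_nonneg (Real.rpow_nonneg hp0.le p)
          (Real.rpow_nonneg hβp.le p))
      exact mul_le_mul_of_nonneg_left (mul_rpow_sub_rpow_rpow_le (by linarith) hβ hv hvu) hcoef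
    _ = 2 ^ (2 - p) * (u - v) ^ (p - 1) * (u ^ β - v ^ β) := by
      rw [Real.div_rpow hβp.le hp0.le]
      field_simp
    _ ≤ 2 ^ (2 - p) * (s - t) ^ (p - 1) * (u ^ β - v ^ β) := by
      gcongr
      linarith
    _ ≤ (Jp p s - Jp p t) * (u ^ β - v ^ β) := by
      gcongr
      exact two_rpow_mul_sub_rpow_le_Jp_sub_Jp hp (by linarith)

lemma one_div_three_mul_two_rpow_le (p : ℝ) : 1 / (3 * (2 : ℝ) ^ (p - 1)) ≤ 2 ^ (2 - p) := by
  have h2 : (2 : ℝ) ^ (2 - p) * 2 ^ (p - 1) = 2 := by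
    rw [← Real.rpow_add two_pos, show 2 - p + (p - 1) = 1 by ring, Real.rpow_one]
  rw [div_le_iff₀ (by positivity)]
  linarith

section truncPlus

variable {M x y : ℝ}

lemma truncPlus_mono (M : ℝ) : Monotone (truncPlus M) :=
  fun _ _ h => min_le_min_right M (max_le_max_right 0 h)

lemma truncPlus_sub_truncPlus_le (h : y ≤ x) : truncPlus M x - truncPlus M y ≤ x - y := by
  simp only [truncPlus, min_def, max_def]
  split_ifs <;> linarith

lemma truncPlus_nonneg_of_lt (h : truncPlus M y < truncPlus M x) : 0 ≤ truncPlus M y := by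
  have hlt : max y 0 < M := by
    have := h.trans_le (min_le_right _ M)
    rwa [truncPlus, min_lt_iff, lt_self_iff_false, or_false] at this
  exact le_min (le_max_right y 0) ((le_max_right y 0).trans hlt.le)

end truncPlus

theorem pointwise_ineq_trunc_general (p β δ M : ℝ) (hp : 2 ≤ p) (hβ : 1 ≤ β)
    (hδ : 0 < δ) (a b c d : ℝ) :
    (1 / (3 * (2 : ℝ) ^ (p - 1))) * (β * p ^ p / (β + p - 1) ^ p) *
        |(truncPlus M (a - c) + δ) ^ ((β + p - 1) / p)
          - (truncPlus M (b - d) + δ) ^ ((β + p - 1) / p)| ^ p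
      ≤ (Jp p (a - b) - Jp p (c - d)) *
        ((truncPlus M (a - c) + δ) ^ β - (truncPlus M (b - d) + δ) ^ β) := by
  wlog h : truncPlus M (b - d) ≤ truncPlus M (a - c) generalizing a b c d
  · have hswap := this b a d c (le_of_not_ge h)
    rw [abs_sub_comm, ← neg_sub a b, ← neg_sub c d, Jp_neg, Jp_neg] at hswap
    convert hswap using 1
    ring
  rcases h.eq_or_lt with heq | hlt
  · rw [heq, sub_self, sub_self, abs_zero, Real.zero_rpow (by linarith)]
    simp
  have hv : 0 < truncPlus M (b - d) + δ := by linarith [truncPlus_nonneg_of_lt hlt]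
  have hsub := truncPlus_sub_truncPlus_le (M := M) ((truncPlus_mono M).reflect_lt hlt).le
  have hp0 : 0 < p := by linarith
  have hγ : 0 < (β + p - 1) / p := div_pos (by linarith) hp0
  have hcoef : 0 ≤ β * p ^ p / (β + p - 1) ^ p :=
    div_nonneg (mul_nonneg (by linarith) (Real.rpow_nonneg hp0.le p))
      (Real.rpow_nonneg (by linarith) p)
  have huv := Real.rpow_le_rpow hv.le (add_le_add_left hlt.le δ) hγ.le
  rw [abs_of_nonneg (sub_nonneg.2 huv)]
  calc _ ≤ 2 ^ (2 - p) * (β * p ^ p / (β + p - 1) ^ p) * _ := by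
        gcongr
        exact one_div_three_mul_two_rpow_le p
    _ ≤ _ := rpow_sub_rpow_rpow_le_Jp_sub_mul_rpow_sub hp (by linarith) hv (by linarith)
        (by linarith)

theorem pointwise_ineq_trunc (p β δ M : ℝ) (hp : 2 ≤ p) (hβ : 1 ≤ β)
    (hδ : 0 < δ) (hM : 0 < M) (a b c d : ℝ) :
    (1 / (3 * (2 : ℝ) ^ (p - 1))) * (β * p ^ p / (β + p - 1) ^ p) *
        |(truncPlus M (a - c) + δ) ^ ((β + p - 1) / p)
          - (truncPlus M (b - d) + δ) ^ ((β + p - 1) / p)| ^ p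
      ≤ (Jp p (a - b) - Jp p (c - d)) *
        ((truncPlus M (a - c) + δ) ^ β - (truncPlus M (b - d) + δ) ^ β) :=
  pointwise_ineq_trunc_general p β δ M hp hβ hδ a b c d
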